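/- arXiv:2009.05374 — 2 statements merged into one kernel-verified Lean document; each statement's English description precedes it below -/
import Mathlib

section
/- Let x ∈ {q,−1} and let (R^x_{u,w}) be the family of Kazhdan–Lusztig R^x-polynomials of a pircon system (P,S), and assume it satisfies the up-down symmetry. Then for all u, v ∈ P with u < v, the identity Σ_{z : u ≤ z ≤ v} R^x_{u,z}(q) · q^{ρ(z,v)} · R^x_{z,v}(q^{−1}) = 0 holds in ℤ[q,q^{−1}]; equivalently, the family (R^x_{u,w}) is a P-kernel in the sense of Stanley. -/
/-!
Induct on `ρ v`, choosing `M ∈ S` with `M v ⋖ v` and writing `w = M v`. The defining recursion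
says that, as a function of `z`, `q^{ρ v} R_{z,v}(q⁻¹)` is obtained from `q^{ρ w} R_{z,w}(q⁻¹)` by an
operator acting on each matched pair `z ⋖ M z` by a `2 × 2` matrix. Moving it across the sum over
`z` transposes it, and the recursion together with the up-down symmetry shows that the transposed
operator sends `R_{u,z}(q) q^{-ρ z}` to `q R_{M u,z}(q) q^{-ρ z}`, to `-x R_{u,z}(q) q^{-ρ z}`, or to
`(1 - q) R_{u,z}(q) q^{-ρ z} + R_{M u,z}(q) q^{-ρ z}` according as `u ⋖ M u`, `M u = u` or
`M u ⋖ u`. So the sum for `(u, v)` is a combination of the sums for `(u, w)` and `(M u, w)`, which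
vanish by induction unless the first index is `w`; that happens only for `(u, w)` when `u ⋖ M u`,
where the coefficient is zero.
-/

open Polynomial LaurentPolynomial

/-- A quasi special partial matching of a poset `P`: an involution `M : P → P` such that
for every `t`, either `M t ⋖ t`, `M t = t`, or `t ⋖ M t`, and whenever `t ⋖ u` and
`M t ≠ u`, then `M t < M u`. -/
def IsQSPM {P : Type*} [PartialOrder P] (M : P → P) : Prop :=
  Function.Involutive M ∧
  (∀ t : P, M t ⋖ t ∨ M t = t ∨ t ⋖ M t) ∧
  ∀ t u : P, t ⋖ u → M t ≠ u → M t < M u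

/-- A quasi special partial matching of the order ideal `P_{≤w}`. -/
def IsQSPMOn {P : Type*} [PartialOrder P] (w : P) (M : P → P) : Prop :=
  (∀ u : P, u ≤ w → M u ≤ w) ∧
  (∀ u : P, u ≤ w → M (M u) = u) ∧
  (∀ u : P, u ≤ w → M u ⋖ u ∨ M u = u ∨ u ⋖ M u) ∧
  ∀ u t : P, u ≤ w → t ≤ w → u ⋖ t → M u ≠ t → M u < M t

/-- A special partial matching of the order ideal `P_{≤w}` (whose maximum is `w`). -/
def IsSPMOn {P : Type*} [PartialOrder P] (w : P) (M : P → P) : Prop :=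
  IsQSPMOn w M ∧ M w ⋖ w

/-- A pircon: for every non-minimal `x`, the order ideal `P_{≤x}` is finite and admits
a special partial matching. -/
def IsPircon (P : Type*) [PartialOrder P] : Prop :=
  ∀ x : P, ¬ IsMin x → (Set.Iic x).Finite ∧ ∃ M : P → P, IsSPMOn x M

/-- A pircon system `(P,S)`: `S` is a set of quasi special partial matchings of `P` such
that every `w ≠ ⊥` is matched downwards by some `M ∈ S`. -/
def IsPirconSystem {P : Type*} [PartialOrder P] [OrderBot P] (S : Set (P → P)) : Prop :=
  (∀ M ∈ S, IsQSPM M) ∧ ∀ w : P, w ≠ ⊥ → ∃ M ∈ S, M w ⋖ w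

/-- The defining properties of the family of Kazhdan--Lusztig `R^x`-polynomials of a
pircon system `(P,S)`, where `x ∈ {q,-1} ⊆ ℤ[q]` (here `q` is the variable `X`). -/
def IsKLRFamily {P : Type*} [PartialOrder P] (S : Set (P → P)) (x : Polynomial ℤ)
    (R : P → P → Polynomial ℤ) : Prop :=
  (∀ u w : P, ¬ u ≤ w → R u w = 0) ∧
  (∀ w : P, R w w = 1) ∧
  ∀ M ∈ S, ∀ u w : P, M w ⋖ w →
    (M u ⋖ u → R u w = R (M u) (M w)) ∧
    (u ⋖ M u → R u w = (X - 1) * R u (M w) + X * R (M u) (M w)) ∧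
    (M u = u → R u w = (X - 1 - x) * R u (M w))

/-- The up-down symmetry for a family of Kazhdan--Lusztig `R^x`-polynomials. -/
def UpDownSymmetry {P : Type*} [PartialOrder P] (S : Set (P → P)) (x : Polynomial ℤ)
    (R : P → P → Polynomial ℤ) : Prop :=
  ∀ M ∈ S, ∀ u w : P, u ⋖ M u →
    (w ⋖ M w → R u w = R (M u) (M w)) ∧
    (M w ⋖ w → R u w = (X - 1) * R (M u) w + X * R (M u) (M w)) ∧
    (M w = w → R u w = (X - 1 - x) * R (M u) w)

open Function Set

section Matching

variable {α L : Type*}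

theorem finsum_eq_zero_of_involutive [AddCommMonoid L] {M : α → α} (hM : Involutive M)
    {h : α → L} (hpair : ∀ z, h z + h (M z) = 0) (hfix : ∀ z, M z = z → h z = 0) :
    ∑ᶠ z, h z = 0 := by
  by_cases hfin : h.HasFiniteSupport
  · rw [finsum_eq_sum h hfin]
    refine Finset.sum_involution (fun z _ => M z) (fun z _ => hpair z)
      (fun z _ hz hMz => hz (hfix z hMz)) (fun z hz => ?_) (fun z _ => hM z)
    refine (Finite.mem_toFinset hfin).2 fun hMz => ?_
    exact (Finite.mem_toFinset hfin).1 hz (by simpa [hMz] using hpair z)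
  · exact finsum_of_infinite_support hfin

variable [PartialOrder α] [CommRing L]

open scoped Classical in
noncomputable def matchingOp (M : α → α) (a b c e : L) (f : α → L) (z : α) : L :=
  if z ⋖ M z then a * f z + b * f (M z) else if M z ⋖ z then c * f (M z) else e * f z

variable {M : α → α} {a b c e : L} {f : α → L} {z : α}

theorem matchingOp_of_covBy_map (h : z ⋖ M z) :
    matchingOp M a b c e f z = a * f z + b * f (M z) := by
  rw [matchingOp, if_pos h]

theorem matchingOp_of_map_covBy (h : M z ⋖ z) : matchingOp M a b c e f z = c * f (M z) := by
  rw [matchingOp, if_neg fun h' => h.lt.asymm h'.lt, if_pos h]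

theorem matchingOp_of_map_eq (h : M z = z) : matchingOp M a b c e f z = e * f z := by
  have hz : ¬ z ⋖ z := fun h' => h'.ne rfl
  rw [matchingOp, h, if_neg hz, if_neg hz]

theorem hasFiniteSupport_matchingOp (hM : Involutive M) (hf : f.HasFiniteSupport) :
    (matchingOp M a b c e f).HasFiniteSupport := by
  refine (hf.union (hf.preimage hM.injective.injOn)).subset fun z hz => ?_
  by_contra! h
  simp only [mem_union, mem_support, mem_preimage, not_or, not_not] at h
  apply hz
  simp only [matchingOp, h.1, h.2, mul_zero, add_zero, ite_self]

/-- On each matched pair `z ⋖ M z` the operator acts by the matrix `!![a, b; c, 0]`, so its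
transpose for the pairing `∑ᶠ z, g z * f z` swaps `b` and `c`. -/
theorem finsum_mul_matchingOp (hM : Involutive M) (hf : f.HasFiniteSupport) (g : α → L) :
    ∑ᶠ z, g z * matchingOp M a b c e f z = ∑ᶠ z, matchingOp M a c b e g z * f z := by
  rw [← sub_eq_zero, ← finsum_sub_distrib (f := fun z => g z * matchingOp M a b c e f z)
    (g := fun z => matchingOp M a c b e g z * f z)
    ((hasFiniteSupport_matchingOp hM hf).mul_right g) (hf.mul_right _)]
  refine finsum_eq_zero_of_involutive hM (fun z => ?_) (fun z hz => ?_)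
  · have hMM : M (M z) = z := hM z
    unfold matchingOp
    rw [hMM]
    split_ifs with h₁ h₂ <;> first | exact (h₁.lt.asymm h₂.lt).elim | ring
  · rw [matchingOp_of_map_eq hz, matchingOp_of_map_eq hz]
    ring

end Matching

namespace LaurentPolynomial

variable {R : Type*} [Semiring R]

theorem T_one_mul_T_neg_one : (T 1 * T (-1) : R[T;T⁻¹]) = 1 := by
  rw [← T_add, add_neg_cancel, T_zero]

theorem T_natCast_succ (n : ℕ) : (T ((n + 1 : ℕ) : ℤ) : R[T;T⁻¹]) = T 1 * T n := by
  rw [← T_add]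
  push_cast
  ring_nf

theorem T_neg_natCast (n : ℕ) : (T (-(n : ℤ)) : R[T;T⁻¹]) = T 1 * T (-((n + 1 : ℕ) : ℤ)) := by
  rw [← T_add]
  push_cast
  ring_nf

end LaurentPolynomial

theorem T_one_mul_invert_X_sub_one_sub {x : ℤ[X]} (hx : x = X ∨ x = -1) :
    T 1 * invert (toLaurent (X - 1 - x)) = -toLaurent x := by
  rcases hx with rfl | rfl
  · rw [show (X - 1 - X : ℤ[X]) = -1 by ring]
    simp only [map_neg, map_one, toLaurent_X, mul_neg, mul_one]
  · rw [show (X - 1 - -1 : ℤ[X]) = X by ring]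
    simp only [toLaurent_X, invert_T, T_one_mul_T_neg_one, map_neg, map_one, neg_neg]

theorem toLaurent_mul_X_sub_one_sub {x : ℤ[X]} (hx : x = X ∨ x = -1) :
    toLaurent x * toLaurent (X - 1 - x) = -T 1 := by
  have hquad : x * (X - 1 - x) = -X := by rcases hx with rfl | rfl <;> ring
  rw [← map_mul, hquad, map_neg, toLaurent_X]

section KazhdanLusztig

variable {P : Type*} [PartialOrder P]

/-- The summand `R_{a,z}(q) q^{ρ(z,w)} R_{z,w}(q⁻¹)` of Stanley's kernel sum is
`klLeft R ρ a z * klRight R ρ z w`. -/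
noncomputable def klLeft (R : P → P → ℤ[X]) (ρ : P → ℕ) (a z : P) : ℤ[T;T⁻¹] :=
  toLaurent (R a z) * T (-(ρ z : ℤ))

noncomputable def klRight (R : P → P → ℤ[X]) (ρ : P → ℕ) (z w : P) : ℤ[T;T⁻¹] :=
  T (ρ w : ℤ) * invert (toLaurent (R z w))

noncomputable def klKernel (R : P → P → ℤ[X]) (ρ : P → ℕ) (a w : P) : ℤ[T;T⁻¹] :=
  ∑ᶠ z, klLeft R ρ a z * klRight R ρ z w

variable {R : P → P → ℤ[X]} {ρ : P → ℕ}

theorem support_klRight_subset (hR0 : ∀ a b, ¬ a ≤ b → R a b = 0) (w : P) :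
    support (klRight R ρ · w) ⊆ Iic w := by
  intro z hz
  by_contra h
  exact hz (by simp only [klRight, hR0 z w h, map_zero, mul_zero])

theorem klKernel_eq_zero_of_not_le (hR0 : ∀ a b, ¬ a ≤ b → R a b = 0) {a w : P}
    (h : ¬ a ≤ w) : klKernel R ρ a w = 0 := by
  refine finsum_eq_zero_of_forall_eq_zero fun z => ?_
  by_cases haz : a ≤ z
  · rw [klRight, hR0 z w fun hzw => h (haz.trans hzw), map_zero, map_zero, mul_zero, mul_zero]
  · rw [klLeft, hR0 a z haz, map_zero, zero_mul, zero_mul]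

theorem finsum_Icc_eq_klKernel (hR0 : ∀ a b, ¬ a ≤ b → R a b = 0) (u v : P) :
    ∑ᶠ z ∈ Icc u v, toLaurent (R u z) * (T ((ρ v : ℤ) - (ρ z : ℤ)) * invert (toLaurent (R z v))) =
      klKernel R ρ u v := by
  rw [finsum_mem_def, indicator_eq_self.2]
  · exact finsum_congr fun z => by rw [klLeft, klRight, T_sub]; ring
  · intro z hz
    by_contra h
    rcases not_and_or.1 h with huz | hzv
    · exact hz (by simp only [hR0 u z huz, map_zero, zero_mul])
    · exact hz (by simp only [hR0 z v hzv, map_zero, mul_zero])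

variable {S : Set (P → P)} {x : ℤ[X]} {M : P → P}

theorem T_neg_rank_of_covBy (hρ : ∀ a b : P, a ⋖ b → ρ b = ρ a + 1) {a b : P} (h : a ⋖ b) :
    (T (-(ρ a : ℤ)) : ℤ[T;T⁻¹]) = T 1 * T (-(ρ b : ℤ)) := by
  rw [hρ a b h, T_neg_natCast]

theorem klRight_eq_matchingOp (hρ : ∀ a b : P, a ⋖ b → ρ b = ρ a + 1) (hx : x = X ∨ x = -1)
    (hR : IsKLRFamily S x R) (hMS : M ∈ S) (hM : IsQSPM M) {v : P} (hv : M v ⋖ v) (z : P) :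
    klRight R ρ z v = matchingOp M (1 - T 1) 1 (T 1) (-toLaurent x) (klRight R ρ · (M v)) z := by
  have hT : (T (ρ v : ℤ) : ℤ[T;T⁻¹]) = T 1 * T (ρ (M v) : ℤ) := by
    rw [hρ _ _ hv, T_natCast_succ]
  obtain ⟨hdown, hup, hfix⟩ := hR.2.2 M hMS z v hv
  rcases hM.2.1 z with hz | hz | hz
  · rw [matchingOp_of_map_covBy hz, klRight, klRight, hdown hz, hT]
    ring
  · rw [matchingOp_of_map_eq hz, klRight, klRight, hfix hz, hT, map_mul, map_mul]
    linear_combination T (ρ (M v) : ℤ) * invert (toLaurent (R z (M v))) *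
      T_one_mul_invert_X_sub_one_sub hx
  · rw [matchingOp_of_covBy_map hz, klRight, klRight, klRight, hup hz, hT]
    simp only [map_add, map_mul, map_sub, map_one, toLaurent_X, invert_T]
    linear_combination T (ρ (M v) : ℤ) *
      (invert (toLaurent (R z (M v))) + invert (toLaurent (R (M z) (M v)))) *
      T_one_mul_T_neg_one (R := ℤ)

theorem matchingOp_klLeft_of_covBy_map (hρ : ∀ a b : P, a ⋖ b → ρ b = ρ a + 1)
    (hx : x = X ∨ x = -1) (hud : UpDownSymmetry S x R) (hMS : M ∈ S) (hM : IsQSPM M) {u : P}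
    (hu : u ⋖ M u) (z : P) :
    matchingOp M (1 - T 1) (T 1) 1 (-toLaurent x) (klLeft R ρ u) z =
      T 1 * klLeft R ρ (M u) z := by
  have hup : ∀ z, z ⋖ M z → klLeft R ρ u z = T 1 * klLeft R ρ (M u) (M z) := fun z hz => by
    rw [klLeft, klLeft, (hud M hMS u z hu).1 hz, T_neg_rank_of_covBy hρ hz]
    ring
  rcases hM.2.1 z with hz | hz | hz
  · rw [matchingOp_of_map_covBy hz, one_mul, hup (M z) (by rwa [hM.1 z]), hM.1 z]
  · rw [matchingOp_of_map_eq hz, klLeft, klLeft, (hud M hMS u z hu).2.2 hz, map_mul]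
    linear_combination -(toLaurent (R (M u) z) * T (-(ρ z : ℤ))) *
      toLaurent_mul_X_sub_one_sub hx
  · have hMz : M (M z) ⋖ M z := by rwa [hM.1 z]
    have hdown := (hud M hMS u (M z) hu).2.1 hMz
    rw [hM.1 z] at hdown
    rw [matchingOp_of_covBy_map hz, hup z hz, klLeft, klLeft, klLeft, hdown,
      T_neg_rank_of_covBy hρ hz]
    simp only [map_add, map_mul, map_sub, map_one, toLaurent_X]
    ring

theorem matchingOp_klLeft_of_map_eq (hρ : ∀ a b : P, a ⋖ b → ρ b = ρ a + 1)
    (hx : x = X ∨ x = -1) (hR : IsKLRFamily S x R) (hMS : M ∈ S) (hM : IsQSPM M) {u : P}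
    (hu : M u = u) (z : P) :
    matchingOp M (1 - T 1) (T 1) 1 (-toLaurent x) (klLeft R ρ u) z =
      -toLaurent x * klLeft R ρ u z := by
  have hdown : ∀ z, M z ⋖ z →
      klLeft R ρ u z = toLaurent (X - 1 - x) * toLaurent (R u (M z)) * T (-(ρ z : ℤ)) :=
    fun z hz => by rw [klLeft, (hR.2.2 M hMS u z hz).2.2 hu, map_mul]
  rcases hM.2.1 z with hz | hz | hz
  · rw [matchingOp_of_map_covBy hz, hdown z hz, klLeft, T_neg_rank_of_covBy hρ hz]
    linear_combination toLaurent (R u (M z)) * T (-(ρ z : ℤ)) * toLaurent_mul_X_sub_one_sub hx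
  · rw [matchingOp_of_map_eq hz]
  · have hMz : M (M z) ⋖ M z := by rwa [hM.1 z]
    rw [matchingOp_of_covBy_map hz, hdown (M z) hMz, hM.1 z, klLeft, T_neg_rank_of_covBy hρ hz]
    simp only [map_sub, map_one, toLaurent_X]
    ring

theorem matchingOp_klLeft_of_map_covBy (hρ : ∀ a b : P, a ⋖ b → ρ b = ρ a + 1)
    (hR : IsKLRFamily S x R) (hud : UpDownSymmetry S x R) (hMS : M ∈ S) (hM : IsQSPM M)
    {u : P} (hu : M u ⋖ u) (z : P) :
    matchingOp M (1 - T 1) (T 1) 1 (-toLaurent x) (klLeft R ρ u) z =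
      (1 - T 1) * klLeft R ρ u z + klLeft R ρ (M u) z := by
  have hMu : M u ⋖ M (M u) := by rwa [hM.1 u]
  obtain ⟨-, hud_down, hud_fix⟩ := hud M hMS (M u) z hMu
  rw [hM.1 u] at hud_down hud_fix
  rcases hM.2.1 z with hz | hz | hz
  · rw [matchingOp_of_map_covBy hz, klLeft, klLeft, klLeft, hud_down hz,
      T_neg_rank_of_covBy hρ hz]
    simp only [map_add, map_mul, map_sub, map_one, toLaurent_X]
    ring
  · rw [matchingOp_of_map_eq hz, klLeft, klLeft, hud_fix hz]
    simp only [map_mul, map_sub, map_one, toLaurent_X]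
    ring
  · have hMz : M (M z) ⋖ M z := by rwa [hM.1 z]
    have hkl := (hR.2.2 M hMS u (M z) hMz).1 hu
    rw [hM.1 z] at hkl
    rw [matchingOp_of_covBy_map hz, klLeft, klLeft, klLeft, hkl, T_neg_rank_of_covBy hρ hz]
    ring

theorem klKernel_eq_finsum_matchingOp (hρ : ∀ a b : P, a ⋖ b → ρ b = ρ a + 1)
    (hx : x = X ∨ x = -1) (hR : IsKLRFamily S x R) (hMS : M ∈ S) (hM : IsQSPM M) {v : P}
    (hv : M v ⋖ v) (hfin : (Iic (M v)).Finite) (u : P) :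
    klKernel R ρ u v = ∑ᶠ z, matchingOp M (1 - T 1) (T 1) 1 (-toLaurent x) (klLeft R ρ u) z *
      klRight R ρ z (M v) := by
  simp_rw [klKernel, klRight_eq_matchingOp hρ hx hR hMS hM hv]
  exact finsum_mul_matchingOp hM.1 (hfin.subset (support_klRight_subset hR.1 _)) _

theorem klKernel_eq_zero_of_map_covBy (hρ : ∀ a b : P, a ⋖ b → ρ b = ρ a + 1)
    (hx : x = X ∨ x = -1) (hR : IsKLRFamily S x R) (hud : UpDownSymmetry S x R) (hMS : M ∈ S)
    (hM : IsQSPM M) {v : P} (hv : M v ⋖ v) (hfin : (Iic (M v)).Finite)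
    (hK : ∀ a, a ≠ M v → klKernel R ρ a (M v) = 0) {u : P} (huv : u < v) :
    klKernel R ρ u v = 0 := by
  have hsupp : (klRight R ρ · (M v)).HasFiniteSupport :=
    hfin.subset (support_klRight_subset hR.1 _)
  have hMu : M u ≠ M v := hM.1.injective.ne huv.ne
  rw [klKernel_eq_finsum_matchingOp hρ hx hR hMS hM hv hfin]
  unfold klKernel at hK
  rcases hM.2.1 u with hu | hu | hu
  · have hu_ne : u ≠ M v := by
      rintro rfl
      rw [hM.1 v] at hu
      exact hu.lt.asymm huv
    simp_rw [matchingOp_klLeft_of_map_covBy hρ hR hud hMS hM hu, add_mul]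
    rw [finsum_add_distrib (f := fun z => (1 - T 1) * klLeft R ρ u z * klRight R ρ z (M v))
      (g := fun z => klLeft R ρ (M u) z * klRight R ρ z (M v))
      (hsupp.mul_right _) (hsupp.mul_right _)]
    simp_rw [mul_assoc]
    rw [← mul_finsum, hK u hu_ne, hK (M u) hMu, mul_zero, add_zero]
  · have hu_ne : u ≠ M v := by
      rintro rfl
      exact huv.ne (by rw [← hu, hM.1 v])
    simp_rw [matchingOp_klLeft_of_map_eq hρ hx hR hMS hM hu, mul_assoc]
    rw [← mul_finsum, hK u hu_ne, mul_zero]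
  · simp_rw [matchingOp_klLeft_of_covBy_map hρ hx hud hMS hM hu, mul_assoc]
    rw [← mul_finsum, hK (M u) hMu, mul_zero]

theorem klKernel_eq_zero [OrderBot P] (hfin : ∀ w : P, (Iic w).Finite)
    (hρ : ∀ a b : P, a ⋖ b → ρ b = ρ a + 1) (hS : IsPirconSystem S) (hx : x = X ∨ x = -1)
    (hR : IsKLRFamily S x R) (hud : UpDownSymmetry S x R) {u v : P} (huv : u < v) :
    klKernel R ρ u v = 0 := by
  induction hn : ρ v using Nat.strong_induction_on generalizing u v with
  | _ n ih =>
  obtain ⟨M, hMS, hv⟩ := hS.2 v (ne_bot_of_gt huv)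
  refine klKernel_eq_zero_of_map_covBy hρ hx hR hud hMS (hS.1 M hMS) hv (hfin _)
    (fun a ha => ?_) huv
  by_cases hle : a ≤ M v
  · exact ih _ (by rw [← hn, hρ _ _ hv]; omega) (hle.lt_of_ne ha) rfl
  · exact klKernel_eq_zero_of_not_le hR.1 hle

end KazhdanLusztig

theorem IsPircon.finite_Iic {P : Type*} [PartialOrder P] (hP : IsPircon P) (w : P) :
    (Iic w).Finite := by
  by_cases hw : IsMin w
  · rw [hw.Iic_eq]
    exact finite_singleton w
  · exact (hP w hw).1

theorem upDownSymmetry_imp_kernel_general {P : Type*} [PartialOrder P] [OrderBot P]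
    (ρ : P → ℕ) (hρcov : ∀ a b : P, a ⋖ b → ρ b = ρ a + 1)
    (hP : IsPircon P) {S : Set (P → P)} (hS : IsPirconSystem S)
    {x : Polynomial ℤ} (hx : x = X ∨ x = -1)
    {R : P → P → Polynomial ℤ} (hR : IsKLRFamily S x R)
    (hud : UpDownSymmetry S x R) :
    ∀ u v : P, u < v →
      ∑ᶠ z ∈ Set.Icc u v,
        toLaurent (R u z) * (T ((ρ v : ℤ) - (ρ z : ℤ)) * invert (toLaurent (R z v))) = 0 := by
  intro u v huv
  rw [finsum_Icc_eq_klKernel hR.1]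
  exact klKernel_eq_zero hP.finite_Iic hρcov hS hx hR hud huv

/-- If the family of Kazhdan--Lusztig `R^x`-polynomials of a pircon system `(P,S)`
satisfies the up-down symmetry, then it is a `P`-kernel: for all `u < v`,
`Σ_{u ≤ z ≤ v} R^x_{u,z}(q) · q^{ρ(z,v)} · R^x_{z,v}(q⁻¹) = 0` in `ℤ[q,q⁻¹]`
(the involution `q ↦ q⁻¹` of `ℤ[q,q⁻¹]` being `LaurentPolynomial.invert`). -/
theorem upDownSymmetry_imp_kernel {P : Type*} [PartialOrder P] [OrderBot P]
    (ρ : P → ℕ) (hρ0 : ρ (⊥ : P) = 0) (hρcov : ∀ a b : P, a ⋖ b → ρ b = ρ a + 1)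
    (hP : IsPircon P) {S : Set (P → P)} (hS : IsPirconSystem S)
    {x : Polynomial ℤ} (hx : x = X ∨ x = -1)
    {R : P → P → Polynomial ℤ} (hR : IsKLRFamily S x R)
    (hud : UpDownSymmetry S x R) :
    ∀ u v : P, u < v →
      ∑ᶠ z ∈ Set.Icc u v,
        toLaurent (R u z) * (T ((ρ v : ℤ) - (ρ z : ℤ)) * invert (toLaurent (R z v))) = 0 :=
  upDownSymmetry_imp_kernel_general ρ hρcov hP hS hx hR hud
end

section
/- Let {x,z} = {q,−1}, let (R^q_{u,w}) and (R^{−1}_{u,w}) be the two families of Kazhdan–Lusztig R-polynomials of a pircon system (P,S), both satisfying the up-down symmetry, and let (P^z_{u,w}) be the Kazhdan–Lusztig–Stanley polynomials of (R^z_{u,w}). Then ι^x(C'^x_w) = C'^x_w for every w ∈ P. -/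
open Polynomial LaurentPolynomial

noncomputable section

/-!  The ring `A = ℤ[q^{1/2}, q^{-1/2}]` is realized as `LaurentPolynomial ℤ`, with
`q^{1/2} = T 1` and hence `q = T 2`; the bar involution `q^{1/2} ↦ q^{-1/2}` is
`LaurentPolynomial.invert`.  The free `A`-module `𝓜_P = ⊕_{u ∈ P} A·m_u` is realized as
the finitely supported elements of `P → A`, the basis element `m_u` corresponding to the
indicator of `u`. -/

/-- Evaluation of a polynomial in `q` at `q = T 2`, i.e. the inclusion
`ℤ[q] → ℤ[q^{1/2}, q^{-1/2}]`. -/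
def evq (p : Polynomial ℤ) : LaurentPolynomial ℤ :=
  Polynomial.aeval (T 2 : LaurentPolynomial ℤ) p

open Classical in
/-- The `y`-action of the operator `T_M` on `𝓜_P`, written in coordinates:
`T_M(m_v) = m_{M v}` if `v ⋖ M v`; `T_M(m_v) = q·m_{M v} + (q-1)·m_v` if `M v ⋖ v`;
and `T_M(m_v) = y·m_v` if `M v = v`. -/
def TMact {P : Type*} [PartialOrder P] (M : P → P) (y : LaurentPolynomial ℤ)
    (f : P → LaurentPolynomial ℤ) : P → LaurentPolynomial ℤ := fun u =>
  if M u = u then y * f u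
  else if M u < u then f (M u) + (T 2 - 1) * f u
  else T 2 * f (M u)

/-- The map `ι^x` on `𝓜_P`, written in coordinates:
`ι^x(Σ_v f_v·m_v) = Σ_v f̄_v·q^{-ρ(v)}·Σ_{u} (-1)^{ρ(u,v)}·R^x_{u,v}(q)·m_u`. -/
def iotaAct {P : Type*} [PartialOrder P] (ρ : P → ℕ) (R : P → P → Polynomial ℤ)
    (f : P → LaurentPolynomial ℤ) : P → LaurentPolynomial ℤ := fun u =>
  ∑ᶠ v : P, invert (f v) * (T (-2 * (ρ v : ℤ)) * ((-1) ^ (ρ v - ρ u) * evq (R u v)))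

/-- The involution `j_P` of `𝓜_P`: `j_P(a·m_w) = ā·(-q^{-1})^{ρ(w)}·m_w`. -/
def jPact {P : Type*} [PartialOrder P] (ρ : P → ℕ) (f : P → LaurentPolynomial ℤ) :
    P → LaurentPolynomial ℤ := fun w => invert (f w) * (-T (-2)) ^ (ρ w)

/-- `deg f < k/2`. -/
def DegLtHalf (f : Polynomial ℤ) (k : ℤ) : Prop :=
  f = 0 ∨ 2 * (f.natDegree : ℤ) < k

/-- The Kazhdan--Lusztig--Stanley polynomials of the kernel `(R_{u,w})`: `P_{u,w} = 0`
unless `u ≤ w`, `P_{w,w} = 1`, `deg P_{u,w} < ρ(u,w)/2` for `u < w`, and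
`q^{ρ(u,w)}·P_{u,w}(q⁻¹) = Σ_{u ≤ t ≤ w} R_{u,t}(q)·P_{t,w}(q)`. -/
def IsKLSFamily {P : Type*} [PartialOrder P] (ρ : P → ℕ)
    (R Pp : P → P → Polynomial ℤ) : Prop :=
  (∀ u w : P, ¬ u ≤ w → Pp u w = 0) ∧
  (∀ w : P, Pp w w = 1) ∧
  (∀ u w : P, u < w → DegLtHalf (Pp u w) ((ρ w : ℤ) - (ρ u : ℤ))) ∧
  ∀ u w : P, u ≤ w →
    T (2 * ((ρ w : ℤ) - (ρ u : ℤ))) * invert (evq (Pp u w)) =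
      ∑ᶠ t ∈ Set.Icc u w, evq (R u t) * evq (Pp t w)

/-- The Kazhdan--Lusztig element `C^x_w ∈ 𝓜_P`, in coordinates: its coefficient on `m_v`
is `q^{ρ(w)/2}·(-1)^{ρ(v,w)}·q^{-ρ(v)}·P^x_{v,w}(q^{-1})`. -/
def Cel {P : Type*} [PartialOrder P] (ρ : P → ℕ) (Pp : P → P → Polynomial ℤ) (w : P) :
    P → LaurentPolynomial ℤ := fun v =>
  T (ρ w : ℤ) * ((-1) ^ (ρ w - ρ v) * (T (-2 * (ρ v : ℤ)) * invert (evq (Pp v w))))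

/-- The Kazhdan--Lusztig element `C'^x_w ∈ 𝓜_P`, in coordinates: its coefficient on
`m_v` is `q^{-ρ(w)/2}·P^z_{v,w}(q)` (the family `Pp` fed here is `P^z`). -/
def Cel' {P : Type*} [PartialOrder P] (ρ : P → ℕ) (Pp : P → P → Polynomial ℤ) (w : P) :
    P → LaurentPolynomial ℤ := fun v =>
  T (-(ρ w : ℤ)) * evq (Pp v w)

/-!
Substituting the defining identity of `P^z` for `P^z_{v,w}(q⁻¹)`, the coefficient of `m_u` in
`ι^x(C'^x_w)` becomes `q^{-ρ(w)/2} Σ_t P^z_{t,w} Σ_v (-1)^{ρ(u,v)} R^x_{u,v} R^z_{v,t}`, so the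
theorem reduces to the inversion formula `Σ_v (-1)^{ρ(u,v)} R^x_{u,v} R^z_{v,t} = δ_{u,t}`.
This is proved by induction on `ρ(t)`: for `M ∈ S` with `M(t) ⋖ t`, the recursion of `R^z` in
its second argument, applied to the pairs `{v, M(v)}`, rewrites the sum at `t` as a combination
of the sums at `M(t)`. The coefficients come from the recursion and the up-down symmetry of
`R^x`, according to whether `M` fixes, raises or lowers `u`, and they close up because `x` and
`z` are the two roots of `Y² - (q - 1)Y - q`.
-/

open Function

section Order

variable {P : Type*} [PartialOrder P]

theorem IsPircon.finite_Iic_s16 (hP : IsPircon P) (y : P) : (Set.Iic y).Finite := by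
  by_cases hy : IsMin y
  · rw [hy.Iic_eq]
    exact Set.finite_singleton y
  · exact (hP y hy).1

theorem Set.Finite.exists_le_covBy_of_lt {a b : P} (hfin : (Set.Iic b).Finite) (hab : a < b) :
    ∃ c, a ≤ c ∧ c ⋖ b := by
  have hIco : (Set.Ico a b).Finite :=
    hfin.subset (Set.Ico_subset_Iio_self.trans Set.Iio_subset_Iic_self)
  obtain ⟨c, ⟨hac, hcb⟩, hmax⟩ := hIco.exists_maximal ⟨a, le_rfl, hab⟩
  exact ⟨c, hac, hcb, fun d hcd hdb => hcd.not_ge (hmax ⟨hac.trans hcd.le, hdb⟩ hcd.le)⟩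

theorem monotone_of_covBy_eq_add_one {ρ : P → ℕ} (hρ : ∀ a b : P, a ⋖ b → ρ b = ρ a + 1)
    (hfin : ∀ y : P, (Set.Iic y).Finite) : Monotone ρ := by
  intro a b hab
  induction hn : (Set.Iio b).ncard using Nat.strong_induction_on generalizing b with
  | _ n ih =>
    obtain rfl | hab := hab.eq_or_lt
    · exact le_rfl
    obtain ⟨c, hac, hcb⟩ := (hfin b).exists_le_covBy_of_lt hab
    have hlt : (Set.Iio c).ncard < n := hn ▸ Set.ncard_lt_ncard
      (Set.Iio_ssubset_Iio hcb.lt) ((hfin b).subset Set.Iio_subset_Iic_self)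
    have hρac := ih _ hlt hac rfl
    rw [hρ c b hcb]
    omega

theorem finsum_eq_finsum_of_add_comp_eq {α M : Type*} [AddCommMonoid M] [IsAddTorsionFree M]
    {σ : α → α} (hσ : Involutive σ) {f g : α → M} (hf : (support f).Finite)
    (hg : (support g).Finite) (h : ∀ a, f a + f (σ a) = g a + g (σ a)) :
    ∑ᶠ a, f a = ∑ᶠ a, g a := by
  have two_nsmul_finsum : ∀ φ : α → M, (support φ).Finite →
      2 • ∑ᶠ a, φ a = ∑ᶠ a, (φ a + φ (σ a)) := fun φ hφ => by
    rw [finsum_add_distrib hφ (hφ.preimage hσ.injective.injOn), two_nsmul]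
    exact congrArg _ (finsum_comp_equiv (hσ.toPerm σ)).symm
  rw [← nsmul_right_inj two_ne_zero, two_nsmul_finsum f hf, two_nsmul_finsum g hg]
  exact finsum_congr h

theorem IsQSPM.add_comp_eq_add_comp {M : Type*} [AddCommMonoid M] {σ : P → P}
    (hσ : IsQSPM σ) {f g : P → M} (hfix : ∀ v, σ v = v → f v = g v)
    (hup : ∀ v, v ⋖ σ v → f v + f (σ v) = g v + g (σ v)) (v : P) :
    f v + f (σ v) = g v + g (σ v) := by
  rcases hσ.2.1 v with hdown | hfixed | hcov
  · have := hup (σ v) (by rwa [hσ.1 v])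
    rwa [hσ.1 v, add_comm (f _), add_comm (g _)] at this
  · rw [hfixed, hfix v hfixed]
  · exact hup v hcov

theorem Set.Finite.finite_support_of_not_le {M : Type*} [Zero M] {t : P}
    (hfin : (Set.Iic t).Finite) {f : P → M} (hf : ∀ v, ¬ v ≤ t → f v = 0) :
    (support f).Finite :=
  hfin.subset fun v hv => not_not.1 (mt (hf v) hv)

end Order

theorem evq_zero : evq 0 = 0 := map_zero _

theorem evq_one : evq 1 = 1 := map_one _

theorem evq_finsum {α : Type*} {f : α → ℤ[X]} (hf : (support f).Finite) :
    evq (∑ᶠ a, f a) = ∑ᶠ a, evq (f a) :=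
  map_finsum (aeval (T 2 : LaurentPolynomial ℤ)) hf

section KLR

variable {P : Type*} [PartialOrder P] {S : Set (P → P)} {ρ : P → ℕ} {x z : ℤ[X]}
  {Rx Rz : P → P → ℤ[X]} {M : P → P} {u t : P}

theorem IsKLRFamily.apply_matching_of_covBy {y : ℤ[X]} {R : P → P → ℤ[X]}
    (hR : IsKLRFamily S y R) (hMS : M ∈ S) (hM : Involutive M) {v : P} (hv : v ⋖ M v) (u : P) :
    (M u ⋖ u → R u (M v) = R (M u) v) ∧
    (u ⋖ M u → R u (M v) = (X - 1) * R u v + X * R (M u) v) ∧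
    (M u = u → R u (M v) = (X - 1 - y) * R u v) := by
  simpa only [hM v] using hR.2.2 M hMS u (M v) (by rwa [hM v])

/-- The recursion of `R^z` in its second argument, summed over the pairs `{v, M v}`:
`G` is the image of `F` under the transpose of that recursion. -/
theorem IsKLRFamily.finsum_mul_eq_finsum_mul_apply (hR : IsKLRFamily S z Rz) (hMS : M ∈ S)
    (hM : IsQSPM M) (ht : M t ⋖ t) (hfin : (Set.Iic t).Finite) {F G : P → ℤ[X]}
    (hfix : ∀ v, M v = v → G v = (X - 1 - z) * F v)
    (hup : ∀ v, v ⋖ M v → G v = (X - 1) * F v + F (M v) ∧ G (M v) = X * F v) :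
    ∑ᶠ v, F v * Rz v t = ∑ᶠ v, G v * Rz v (M t) := by
  refine finsum_eq_finsum_of_add_comp_eq hM.1
    (hfin.finite_support_of_not_le fun v hv => by rw [hR.1 v t hv, mul_zero])
    ((hfin.subset (Set.Iic_subset_Iic.2 ht.le)).finite_support_of_not_le
      fun v hv => by rw [hR.1 v (M t) hv, mul_zero])
    (hM.add_comp_eq_add_comp (fun v hv => ?_) fun v hv => ?_)
  · rw [hfix v hv, (hR.2.2 M hMS v t ht).2.2 hv]
    ring
  · have hRv : Rz v t = (X - 1) * Rz v (M t) + X * Rz (M v) (M t) :=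
      (hR.2.2 M hMS v t ht).2.1 hv
    have hRMv : Rz (M v) t = Rz v (M t) := by
      simpa only [hM.1 v] using (hR.2.2 M hMS (M v) t ht).1 (by rwa [hM.1 v])
    rw [hRv, hRMv, (hup v hv).1, (hup v hv).2]
    ring

def inversionSum (ρ : P → ℕ) (Rx Rz : P → P → ℤ[X]) (u t : P) : ℤ[X] :=
  ∑ᶠ v, (-1) ^ ρ v * Rx u v * Rz v t

theorem inversionSum_self (hRx : IsKLRFamily S x Rx) (hRz : IsKLRFamily S z Rz) (u : P) :
    inversionSum ρ Rx Rz u u = (-1) ^ ρ u := by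
  rw [inversionSum, finsum_eq_single _ u, hRx.2.1, hRz.2.1, mul_one, mul_one]
  intro v hv
  by_cases huv : u ≤ v
  · rw [hRz.1 v u fun hvu => hv (le_antisymm hvu huv), mul_zero]
  · rw [hRx.1 u v huv, mul_zero, zero_mul]

theorem inversionSum_of_not_le (hRx : IsKLRFamily S x Rx) (hRz : IsKLRFamily S z Rz)
    (hut : ¬ u ≤ t) : inversionSum ρ Rx Rz u t = 0 := by
  refine finsum_eq_zero_of_forall_eq_zero fun v => ?_
  by_cases huv : u ≤ v
  · rw [hRz.1 v t fun hvt => hut (huv.trans hvt), mul_zero]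
  · rw [hRx.1 u v huv, mul_zero, zero_mul]

theorem inversionSum_eq_add_of_matching (hρ : ∀ a b : P, a ⋖ b → ρ b = ρ a + 1)
    (hRz : IsKLRFamily S z Rz) (hMS : M ∈ S) (hM : IsQSPM M) (ht : M t ⋖ t)
    (hfin : (Set.Iic t).Finite) (a b : ℤ[X])
    (hfix : ∀ v, M v = v → a * Rx u v + b * Rx (M u) v = (X - 1 - z) * Rx u v)
    (hlower : ∀ v, v ⋖ M v → a * Rx u v + b * Rx (M u) v = (X - 1) * Rx u v - Rx u (M v))
    (hupper : ∀ v, v ⋖ M v → a * Rx u (M v) + b * Rx (M u) (M v) = -X * Rx u v) :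
    inversionSum ρ Rx Rz u t =
      a * inversionSum ρ Rx Rz u (M t) + b * inversionSum ρ Rx Rz (M u) (M t) := by
  have hfin' : (Set.Iic (M t)).Finite := hfin.subset (Set.Iic_subset_Iic.2 ht.le)
  rw [inversionSum, hRz.finsum_mul_eq_finsum_mul_apply hMS hM ht hfin
    (G := fun v => (-1) ^ ρ v * (a * Rx u v + b * Rx (M u) v))
    (fun v hv => by rw [hfix v hv]; ring)
    (fun v hv => by
      rw [hρ v (M v) hv, pow_succ]
      constructor
      · linear_combination (-1) ^ ρ v * hlower v hv
      · linear_combination -(-1) ^ ρ v * hupper v hv),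
    inversionSum, inversionSum, mul_finsum, mul_finsum, ← finsum_add_distrib
      (hfin'.finite_support_of_not_le fun v hv => by rw [hRz.1 v (M t) hv, mul_zero, mul_zero])
      (hfin'.finite_support_of_not_le fun v hv => by rw [hRz.1 v (M t) hv, mul_zero, mul_zero])]
  exact finsum_congr fun v => by ring

theorem inversionSum_of_apply_eq_self (hρ : ∀ a b : P, a ⋖ b → ρ b = ρ a + 1)
    (hsum : x + z = X - 1) (hprod : x * z = -X)
    (hRx : IsKLRFamily S x Rx) (hRz : IsKLRFamily S z Rz) (hMS : M ∈ S) (hM : IsQSPM M)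
    (ht : M t ⋖ t) (hfin : (Set.Iic t).Finite) (hu : M u = u) :
    inversionSum ρ Rx Rz u t = x * inversionSum ρ Rx Rz u (M t) := by
  have hRxMv : ∀ v, v ⋖ M v → Rx u (M v) = (X - 1 - x) * Rx u v := fun v hv =>
    (hRx.apply_matching_of_covBy hMS hM.1 hv u).2.2 hu
  rw [inversionSum_eq_add_of_matching hρ hRz hMS hM ht hfin x 0
    (fun v _ => by linear_combination Rx u v * hsum)
    (fun v hv => by rw [hRxMv v hv]; ring)
    (fun v hv => by rw [hRxMv v hv]; linear_combination Rx u v * (hprod - x * hsum))]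
  ring

theorem inversionSum_of_covBy_apply (hρ : ∀ a b : P, a ⋖ b → ρ b = ρ a + 1)
    (hsum : x + z = X - 1) (hprod : x * z = -X)
    (hRz : IsKLRFamily S z Rz) (hudx : UpDownSymmetry S x Rx) (hMS : M ∈ S) (hM : IsQSPM M)
    (ht : M t ⋖ t) (hfin : (Set.Iic t).Finite) (hu : u ⋖ M u) :
    inversionSum ρ Rx Rz u t = -X * inversionSum ρ Rx Rz (M u) (M t) := by
  have hsym := hudx M hMS u
  have hRxMv : ∀ v, v ⋖ M v → Rx u (M v) = (X - 1) * Rx (M u) (M v) + X * Rx (M u) v :=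
    fun v hv => by simpa only [hM.1 v] using (hsym (M v) hu).2.1 (by rwa [hM.1 v])
  rw [inversionSum_eq_add_of_matching hρ hRz hMS hM ht hfin 0 (-X)
    (fun v hv => by
      rw [(hsym v hu).2.2 hv]
      linear_combination Rx (M u) v * ((X - 1) * hsum - hprod))
    (fun v hv => by rw [hRxMv v hv, (hsym v hu).1 hv]; ring)
    (fun v hv => by rw [(hsym v hu).1 hv]; ring)]
  ring

theorem inversionSum_of_apply_covBy (hρ : ∀ a b : P, a ⋖ b → ρ b = ρ a + 1)
    (hsum : x + z = X - 1)
    (hRx : IsKLRFamily S x Rx) (hRz : IsKLRFamily S z Rz) (hudx : UpDownSymmetry S x Rx)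
    (hMS : M ∈ S) (hM : IsQSPM M) (ht : M t ⋖ t) (hfin : (Set.Iic t).Finite) (hu : M u ⋖ u) :
    inversionSum ρ Rx Rz u t =
      (X - 1) * inversionSum ρ Rx Rz u (M t) - inversionSum ρ Rx Rz (M u) (M t) := by
  have hMu : M u ⋖ M (M u) := by rwa [hM.1 u]
  have hRxMv : ∀ v, v ⋖ M v → Rx (M u) (M v) = (X - 1) * Rx (M u) v + X * Rx u v :=
    fun v hv => by
      simpa only [hM.1 u] using (hRx.apply_matching_of_covBy hMS hM.1 hv (M u)).2.1 hMu
  have hRxMu : ∀ v, M v = v → Rx (M u) v = (X - 1 - x) * Rx u v :=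
    fun v hv => by simpa only [hM.1 u] using (hudx M hMS (M u) v hMu).2.2 hv
  rw [inversionSum_eq_add_of_matching hρ hRz hMS hM ht hfin (X - 1) (-1)
    (fun v hv => by rw [hRxMu v hv]; linear_combination Rx u v * hsum)
    (fun v hv => by rw [(hRx.apply_matching_of_covBy hMS hM.1 hv u).1 hu]; ring)
    (fun v hv => by rw [(hRx.apply_matching_of_covBy hMS hM.1 hv u).1 hu, hRxMv v hv]; ring)]
  ring

theorem inversionSum_eq_ite [OrderBot P] [DecidableEq P]
    (hρ : ∀ a b : P, a ⋖ b → ρ b = ρ a + 1) (hfin : ∀ y : P, (Set.Iic y).Finite)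
    (hS : IsPirconSystem S)
    (hsum : x + z = X - 1) (hprod : x * z = -X)
    (hRx : IsKLRFamily S x Rx) (hRz : IsKLRFamily S z Rz) (hudx : UpDownSymmetry S x Rx)
    (u t : P) : inversionSum ρ Rx Rz u t = if u = t then (-1) ^ ρ t else 0 := by
  induction hn : ρ t using Nat.strong_induction_on generalizing u t with
  | _ n ih =>
  obtain rfl | hut := eq_or_ne u t
  · rw [if_pos rfl, inversionSum_self hRx hRz, hn]
  rw [if_neg hut]
  obtain rfl | htbot := eq_or_ne t ⊥
  · exact inversionSum_of_not_le hRx hRz fun h => hut (le_bot_iff.1 h)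
  obtain ⟨M, hMS, ht⟩ := hS.2 t htbot
  have hM := hS.1 M hMS
  have ih' := fun u' => ih (ρ (M t)) (by rw [← hn, hρ _ _ ht]; omega) u' (M t) rfl
  have hMuMt : M u ≠ M t := hM.1.injective.ne hut
  rcases hM.2.1 u with hu | hu | hu
  · have huMt : u ≠ M t := by
      rintro rfl
      rw [hM.1 t] at hu
      exact hu.lt.not_gt ht.lt
    rw [inversionSum_of_apply_covBy hρ hsum hRx hRz hudx hMS hM ht (hfin t) hu, ih', ih',
      if_neg huMt, if_neg hMuMt]
    ring
  · rw [inversionSum_of_apply_eq_self hρ hsum hprod hRx hRz hMS hM ht (hfin t) hu, ih',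
      if_neg (hu ▸ hMuMt), mul_zero]
  · rw [inversionSum_of_covBy_apply hρ hsum hprod hRz hudx hMS hM ht (hfin t) hu, ih',
      if_neg hMuMt, mul_zero]

/-- `ρ v - ρ u` is truncated subtraction; it is the true difference wherever `R^x_{u,v} ≠ 0`
because `ρ` is monotone. -/
theorem finsum_neg_one_pow_sub_mul_eq_ite [OrderBot P] [DecidableEq P]
    (hρ : ∀ a b : P, a ⋖ b → ρ b = ρ a + 1) (hfin : ∀ y : P, (Set.Iic y).Finite)
    (hS : IsPirconSystem S) (hsum : x + z = X - 1) (hprod : x * z = -X)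
    (hRx : IsKLRFamily S x Rx) (hRz : IsKLRFamily S z Rz) (hudx : UpDownSymmetry S x Rx)
    (u t : P) : ∑ᶠ v, (-1) ^ (ρ v - ρ u) * Rx u v * Rz v t = if u = t then 1 else 0 := by
  have hsq : ((-1 : ℤ[X]) ^ ρ u) * (-1) ^ ρ u = 1 := by
    rw [← mul_pow, neg_mul_neg, one_mul, one_pow]
  have hterm : ∀ v, (-1) ^ (ρ v - ρ u) * Rx u v * Rz v t =
      (-1) ^ ρ u * ((-1) ^ ρ v * Rx u v * Rz v t) := fun v => by
    by_cases huv : u ≤ v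
    · obtain ⟨k, hk⟩ := Nat.exists_eq_add_of_le (monotone_of_covBy_eq_add_one hρ hfin huv)
      rw [hk, Nat.add_sub_cancel_left, pow_add]
      linear_combination (-(-1) ^ k * Rx u v * Rz v t) * hsq
    · rw [hRx.1 u v huv]
      ring
  rw [finsum_congr hterm, ← mul_finsum, ← inversionSum,
    inversionSum_eq_ite hρ hfin hS hsum hprod hRx hRz hudx]
  split_ifs with hut
  · subst hut
    exact hsq
  · exact mul_zero _

end KLR

theorem IsKLSFamily.invert_evq_eq_sum {P : Type*} [PartialOrder P] {ρ : P → ℕ}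
    {Rz Pz : P → P → ℤ[X]} (hPz : IsKLSFamily ρ Rz Pz) (hRz : ∀ u w, ¬ u ≤ w → Rz u w = 0)
    {w : P} {s : Finset P} (hs : Set.Iic w ⊆ s) (v : P) :
    invert (evq (Pz v w)) =
      T (2 * ((ρ v : ℤ) - ρ w)) * ∑ t ∈ s, evq (Rz v t) * evq (Pz t w) := by
  have hsupp : support (fun t => evq (Rz v t) * evq (Pz t w)) ⊆ Set.Icc v w := by
    intro t ht
    by_contra hvtw
    rcases not_and_or.1 hvtw with h | h
    · exact ht (by simp only [hRz v t h, evq, map_zero, zero_mul])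
    · exact ht (by simp only [hPz.1 t w h, evq, map_zero, mul_zero])
  by_cases hvw : v ≤ w
  · rw [← finsum_mem_eq_sum_of_inter_support_eq _ (s := Set.Icc v w) (by
      rw [Set.inter_eq_right.2 hsupp, Set.inter_eq_right.2
        (hsupp.trans (Set.Icc_subset_Iic_self.trans hs))]),
      ← hPz.2.2.2 v w hvw, ← mul_assoc, ← T_add,
      show 2 * ((ρ v : ℤ) - ρ w) + 2 * ((ρ w : ℤ) - ρ v) = 0 by ring, T_zero, one_mul]
  · rw [hPz.1 v w hvw, Finset.sum_eq_zero fun t _ => notMem_support.1 fun ht =>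
      hvw ((hsupp ht).1.trans (hsupp ht).2)]
    simp [evq]

theorem iotaAct_Cel'_apply {P : Type*} [PartialOrder P] {ρ : P → ℕ}
    (hfin : ∀ y : P, (Set.Iic y).Finite) {Rx Rz Pz : P → P → ℤ[X]}
    (hRz : ∀ u w, ¬ u ≤ w → Rz u w = 0) (hPz : IsKLSFamily ρ Rz Pz)
    {w : P} {s : Finset P} (hs : Set.Iic w ⊆ s) (u : P) :
    iotaAct ρ Rx (Cel' ρ Pz w) u = ∑ t ∈ s, T (-(ρ w : ℤ)) * evq (Pz t w) *
      evq (∑ᶠ v, (-1) ^ (ρ v - ρ u) * Rx u v * Rz v t) := by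
  have hsupp : ∀ t, (support fun v => (-1) ^ (ρ v - ρ u) * Rx u v * Rz v t).Finite :=
    fun t => (hfin t).finite_support_of_not_le fun v hv => by rw [hRz v t hv, mul_zero]
  calc iotaAct ρ Rx (Cel' ρ Pz w) u
      = ∑ᶠ v, ∑ t ∈ s, T (-(ρ w : ℤ)) * evq (Pz t w) *
          evq ((-1) ^ (ρ v - ρ u) * Rx u v * Rz v t) := by
        refine finsum_congr fun v => ?_
        have hT : (T (-(ρ w : ℤ)) : LaurentPolynomial ℤ) =
            T (- -(ρ w : ℤ)) * T (2 * ((ρ v : ℤ) - ρ w)) * T (-2 * (ρ v : ℤ)) := by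
          rw [← T_add, ← T_add]
          congr 1
          ring
        rw [Cel', map_mul, invert_T, hPz.invert_evq_eq_sum hRz hs, Finset.mul_sum,
          Finset.mul_sum, Finset.sum_mul]
        refine Finset.sum_congr rfl fun t _ => ?_
        simp only [evq, map_mul, map_pow, map_neg, map_one]
        rw [hT]
        ring
    _ = _ := by
        rw [finsum_sum_comm _ _ fun t _ => (hsupp t).subset fun v => mt fun hv => by
          simp only at hv ⊢
          rw [hv, evq_zero, mul_zero]]
        exact Finset.sum_congr rfl fun t _ => by rw [evq_finsum (hsupp t), mul_finsum]

theorem iota_Cel'_general {P : Type*} [PartialOrder P] [OrderBot P]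
    (ρ : P → ℕ) (hρcov : ∀ a b : P, a ⋖ b → ρ b = ρ a + 1)
    (hP : IsPircon P) {S : Set (P → P)} (hS : IsPirconSystem S)
    {x z : Polynomial ℤ} (hxz : (x = X ∧ z = -1) ∨ (x = -1 ∧ z = X))
    {Rx Rz : P → P → Polynomial ℤ}
    (hRx : IsKLRFamily S x Rx) (hRz : IsKLRFamily S z Rz)
    (hudx : UpDownSymmetry S x Rx)
    {Pz : P → P → Polynomial ℤ} (hPz : IsKLSFamily ρ Rz Pz)
    (w : P) :
    iotaAct ρ Rx (Cel' ρ Pz w) = Cel' ρ Pz w := by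
  classical
  have hfin := hP.finite_Iic_s16
  obtain ⟨hsum, hprod⟩ : x + z = X - 1 ∧ x * z = -X := by
    rcases hxz with ⟨rfl, rfl⟩ | ⟨rfl, rfl⟩ <;> constructor <;> ring
  have hs : Set.Iic w ⊆ (hfin w).toFinset := by rw [(hfin w).coe_toFinset]
  funext u
  simp only [iotaAct_Cel'_apply hfin hRz.1 hPz hs,
    finsum_neg_one_pow_sub_mul_eq_ite hρcov hfin hS hsum hprod hRx hRz hudx,
    apply_ite evq, evq_one, evq_zero, mul_ite, mul_one, mul_zero, Finset.sum_ite_eq]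
  split_ifs with hu
  · rfl
  · rw [Cel', hPz.1 u w fun h => hu (hs h), evq_zero, mul_zero]

/-- The Kazhdan--Lusztig element `C'^x_w = q^{-ρ(w)/2}·Σ_{v ≤ w} P^z_{v,w}(q)·m_v` is
invariant under `ι^x`. -/
theorem iota_Cel' {P : Type*} [PartialOrder P] [OrderBot P]
    (ρ : P → ℕ) (hρ0 : ρ (⊥ : P) = 0) (hρcov : ∀ a b : P, a ⋖ b → ρ b = ρ a + 1)
    (hP : IsPircon P) {S : Set (P → P)} (hS : IsPirconSystem S)
    {x z : Polynomial ℤ} (hxz : (x = X ∧ z = -1) ∨ (x = -1 ∧ z = X))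
    {Rx Rz : P → P → Polynomial ℤ}
    (hRx : IsKLRFamily S x Rx) (hRz : IsKLRFamily S z Rz)
    (hudx : UpDownSymmetry S x Rx) (hudz : UpDownSymmetry S z Rz)
    {Pz : P → P → Polynomial ℤ} (hPz : IsKLSFamily ρ Rz Pz)
    (w : P) :
    iotaAct ρ Rx (Cel' ρ Pz w) = Cel' ρ Pz w :=
  iota_Cel'_general ρ hρcov hP hS hxz hRx hRz hudx hPz w
end
end
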